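/- For 0 ≤ t ≤ π/2 and n ≥ 1, 0 ≤ e^{−nt²/6} − (sin t / t)^n ≤ e^{−nt²/6}·(n t⁴ / 138), where (sin t / t) is 1 at t = 0. -/

import Mathlib

open Real

/-! Raising `exp (-(t²/6 + t⁴/138)) ≤ sinc t ≤ exp (-(t²/6))` to the `n`-th power and using
`1 - exp (-x) ≤ x` gives both bounds. The two bounds on `sinc` compare alternating Taylor
truncations of `sin` and of `exp (-x)`; each truncation bound follows from the previous one since a
function with nonnegative derivative on `[0, ∞)` is monotone there. -/

lemma le_of_hasDerivAt_nonneg {f f' : ℝ → ℝ} (hf : ∀ x, HasDerivAt f (f' x) x)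
    (hf' : ∀ x, 0 ≤ x → 0 ≤ f' x) {x : ℝ} (hx : 0 ≤ x) : f 0 ≤ f x := by
  have hmono : MonotoneOn f (Set.Ici 0) :=
    monotoneOn_of_hasDerivWithinAt_nonneg (convex_Ici 0)
      (fun y _ => (hf y).continuousAt.continuousWithinAt)
      (fun y _ => (hf y).hasDerivWithinAt)
      (fun y hy => hf' y (interior_subset hy))
  exact hmono Set.self_mem_Ici hx hx

namespace Real

lemma cos_le_quartic (x : ℝ) : cos x ≤ 1 - x ^ 2 / 2 + x ^ 4 / 24 := by
  wlog hx : 0 ≤ x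
  · simpa [Even.neg_pow (by decide : Even 4)] using this (-x) (by linarith)
  have h := le_of_hasDerivAt_nonneg (f := fun x => 1 - x ^ 2 / 2 + x ^ 4 / 24 - cos x)
    (fun x => ((((hasDerivAt_id x).pow 2).div_const 2).const_sub 1 |>.add
      (((hasDerivAt_id x).pow 4).div_const 24) |>.sub (hasDerivAt_cos x)))
    (fun y hy => by
      simp only [id, Nat.cast_ofNat, Nat.add_one_sub_one]
      nlinarith [sin_ge_sub_cube hy]) hx
  simpa using h

lemma sin_le_quintic {x : ℝ} (hx : 0 ≤ x) : sin x ≤ x - x ^ 3 / 6 + x ^ 5 / 120 := by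
  have h := le_of_hasDerivAt_nonneg (f := fun x => x - x ^ 3 / 6 + x ^ 5 / 120 - sin x)
    (fun x => (hasDerivAt_id x).sub (((hasDerivAt_id x).pow 3).div_const 6) |>.add
      (((hasDerivAt_id x).pow 5).div_const 120) |>.sub (hasDerivAt_sin x))
    (fun y _ => by
      simp only [id, Nat.cast_ofNat, Nat.add_one_sub_one]
      nlinarith [cos_le_quartic y]) hx
  simpa using h

lemma sextic_le_cos (x : ℝ) : 1 - x ^ 2 / 2 + x ^ 4 / 24 - x ^ 6 / 720 ≤ cos x := by
  wlog hx : 0 ≤ x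
  · simpa [Even.neg_pow (by decide : Even 4), Even.neg_pow (by decide : Even 6)]
      using this (-x) (by linarith)
  have h := le_of_hasDerivAt_nonneg
    (f := fun x => cos x - (1 - x ^ 2 / 2 + x ^ 4 / 24 - x ^ 6 / 720))
    (fun x => (hasDerivAt_cos x).sub ((((hasDerivAt_id x).pow 2).div_const 2).const_sub 1 |>.add
      (((hasDerivAt_id x).pow 4).div_const 24) |>.sub (((hasDerivAt_id x).pow 6).div_const 720)))
    (fun y hy => by
      simp only [id, Nat.cast_ofNat, Nat.add_one_sub_one]
      nlinarith [sin_le_quintic hy]) hx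
  simpa using h

lemma septic_le_sin {x : ℝ} (hx : 0 ≤ x) :
    x - x ^ 3 / 6 + x ^ 5 / 120 - x ^ 7 / 5040 ≤ sin x := by
  have h := le_of_hasDerivAt_nonneg
    (f := fun x => sin x - (x - x ^ 3 / 6 + x ^ 5 / 120 - x ^ 7 / 5040))
    (fun x => (hasDerivAt_sin x).sub ((hasDerivAt_id x).sub (((hasDerivAt_id x).pow 3).div_const 6)
      |>.add (((hasDerivAt_id x).pow 5).div_const 120) |>.sub
      (((hasDerivAt_id x).pow 7).div_const 5040)))
    (fun y _ => by
      simp only [id, Nat.cast_ofNat, Nat.add_one_sub_one]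
      nlinarith [sextic_le_cos y]) hx
  simpa using h

lemma exp_neg_le_quadratic {x : ℝ} (hx : 0 ≤ x) : exp (-x) ≤ 1 - x + x ^ 2 / 2 := by
  have h := le_of_hasDerivAt_nonneg (f := fun x => 1 - x + x ^ 2 / 2 - exp (-x))
    (fun x => (hasDerivAt_id x).const_sub 1 |>.add (((hasDerivAt_id x).pow 2).div_const 2)
      |>.sub (hasDerivAt_neg x).exp)
    (fun y _ => by
      simp only [id, Nat.cast_ofNat, Nat.add_one_sub_one]
      linarith [add_one_le_exp (-y)]) hx
  simpa using h

lemma cubic_le_exp_neg {x : ℝ} (hx : 0 ≤ x) : 1 - x + x ^ 2 / 2 - x ^ 3 / 6 ≤ exp (-x) := by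
  have h := le_of_hasDerivAt_nonneg (f := fun x => exp (-x) - (1 - x + x ^ 2 / 2 - x ^ 3 / 6))
    (fun x => (hasDerivAt_neg x).exp.sub ((hasDerivAt_id x).const_sub 1 |>.add
      (((hasDerivAt_id x).pow 2).div_const 2) |>.sub (((hasDerivAt_id x).pow 3).div_const 6)))
    (fun y hy => by
      simp only [id, Nat.cast_ofNat, Nat.add_one_sub_one]
      linarith [exp_neg_le_quadratic hy]) hx
  simpa using h

lemma exp_neg_le_quartic {x : ℝ} (hx : 0 ≤ x) :
    exp (-x) ≤ 1 - x + x ^ 2 / 2 - x ^ 3 / 6 + x ^ 4 / 24 := by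
  have h := le_of_hasDerivAt_nonneg
    (f := fun x => 1 - x + x ^ 2 / 2 - x ^ 3 / 6 + x ^ 4 / 24 - exp (-x))
    (fun x => (hasDerivAt_id x).const_sub 1 |>.add (((hasDerivAt_id x).pow 2).div_const 2)
      |>.sub (((hasDerivAt_id x).pow 3).div_const 6) |>.add
      (((hasDerivAt_id x).pow 4).div_const 24) |>.sub (hasDerivAt_neg x).exp)
    (fun y hy => by
      simp only [id, Nat.cast_ofNat, Nat.add_one_sub_one]
      linarith [cubic_le_exp_neg hy]) hx
  simpa using h

lemma sinc_le_exp_neg {t : ℝ} (ht : t ^ 2 ≤ 36 / 5) : sinc t ≤ exp (-(t ^ 2 / 6)) := by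
  wlog h0 : 0 ≤ t
  · simpa [sinc_neg] using this (t := -t) (by simpa using ht) (by linarith)
  obtain rfl | hpos := h0.eq_or_lt
  · simp
  have hexp := cubic_le_exp_neg (x := t ^ 2 / 6) (by positivity)
  rw [sinc_of_ne_zero hpos.ne', div_le_iff₀ hpos]
  nlinarith [sin_le_quintic h0, pow_nonneg h0 5, pow_nonneg h0 6]

lemma exp_neg_le_sinc {t : ℝ} (ht : t ^ 2 ≤ 3) :
    exp (-(t ^ 2 / 6 + t ^ 4 / 138)) ≤ sinc t := by
  wlog h0 : 0 ≤ t
  · simpa [sinc_neg, Even.neg_pow (by decide : Even 4)]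
      using this (t := -t) (by simpa using ht) (by linarith)
  obtain rfl | hpos := h0.eq_or_lt
  · simp
  -- `-log (sinc t) = t²/6 + t⁴/180 + O(t⁶)`: the slack `1/138 > 1/180` absorbs the tail
  -- as long as `t² ≤ 3`.
  have hpoly (s : ℝ) (hs₀ : 0 ≤ s) (hs : s ≤ 3) :
      1 - (s / 6 + s ^ 2 / 138) + (s / 6 + s ^ 2 / 138) ^ 2 / 2
        - (s / 6 + s ^ 2 / 138) ^ 3 / 6 + (s / 6 + s ^ 2 / 138) ^ 4 / 24
        ≤ 1 - s / 6 + s ^ 2 / 120 - s ^ 3 / 5040 := by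
    have h3 := sub_nonneg.2 hs
    nlinarith [mul_nonneg (mul_nonneg hs₀ hs₀) h3, mul_nonneg (pow_nonneg hs₀ 3) h3,
      mul_nonneg (pow_nonneg hs₀ 4) h3, mul_nonneg (pow_nonneg hs₀ 5) h3,
      mul_nonneg (pow_nonneg hs₀ 6) h3, mul_nonneg (pow_nonneg hs₀ 7) h3,
      pow_nonneg hs₀ 3, pow_nonneg hs₀ 4]
  have hexp := exp_neg_le_quartic (x := t ^ 2 / 6 + t ^ 4 / 138) (by positivity)
  rw [sinc_of_ne_zero hpos.ne', le_div_iff₀ hpos]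
  calc exp (-(t ^ 2 / 6 + t ^ 4 / 138)) * t
      ≤ (1 - t ^ 2 / 6 + (t ^ 2) ^ 2 / 120 - (t ^ 2) ^ 3 / 5040) * t := by
        refine mul_le_mul_of_nonneg_right (hexp.trans ?_) h0
        simpa [← pow_mul] using hpoly (t ^ 2) (sq_nonneg t) ht
    _ ≤ sin t := by linarith [septic_le_sin h0]

end Real

lemma exp_neg_mul_sub_pow_bounds {a b x : ℝ} (n : ℕ) (hlow : exp (-(a + b)) ≤ x)
    (hup : x ≤ exp (-a)) :
    0 ≤ exp (-(n * a)) - x ^ n ∧ exp (-(n * a)) - x ^ n ≤ exp (-(n * a)) * (n * b) := by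
  have hx : 0 ≤ x := (exp_pos _).le.trans hlow
  have hpow_le : x ^ n ≤ exp (-(n * a)) := by
    calc x ^ n ≤ exp (-a) ^ n := pow_le_pow_left₀ hx hup n
      _ = exp (-(n * a)) := by rw [← exp_nat_mul, mul_neg]
  have hpow_ge : exp (-(n * a)) * exp (-(n * b)) ≤ x ^ n := by
    calc exp (-(n * a)) * exp (-(n * b)) = exp (-(a + b)) ^ n := by
          rw [← exp_add, ← exp_nat_mul]; ring_nf
      _ ≤ x ^ n := pow_le_pow_left₀ (exp_pos _).le hlow n
  have hlin : 1 - exp (-(n * b)) ≤ n * b := by linarith [add_one_le_exp (-(n * b))]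
  refine ⟨sub_nonneg.2 hpow_le, ?_⟩
  calc exp (-(n * a)) - x ^ n ≤ exp (-(n * a)) * (1 - exp (-(n * b))) := by linarith
    _ ≤ exp (-(n * a)) * (n * b) := mul_le_mul_of_nonneg_left hlin (exp_pos _).le

theorem exp_sub_sinc_pow_bound_general (n : ℕ) (t : ℝ) (h0 : 0 ≤ t) (h1 : t ≤ π / 2) :
    0 ≤ Real.exp (-(n : ℝ) * t ^ 2 / 6) - (if t = 0 then 1 else Real.sin t / t) ^ n ∧
    Real.exp (-(n : ℝ) * t ^ 2 / 6) - (if t = 0 then 1 else Real.sin t / t) ^ n ≤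
      Real.exp (-(n : ℝ) * t ^ 2 / 6) * ((n : ℝ) * t ^ 4 / 138) := by
  have ht : t ^ 2 ≤ 3 := by nlinarith [pi_lt_d2]
  have h := exp_neg_mul_sub_pow_bounds n (exp_neg_le_sinc ht) (sinc_le_exp_neg (by linarith))
  rw [← sinc_apply, neg_mul, neg_div, mul_div_assoc, mul_div_assoc]
  exact h

theorem exp_sub_sinc_pow_bound (n : ℕ) (hn : 1 ≤ n) (t : ℝ) (h0 : 0 ≤ t) (h1 : t ≤ π / 2) :
    0 ≤ Real.exp (-(n : ℝ) * t ^ 2 / 6) - (if t = 0 then 1 else Real.sin t / t) ^ n ∧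
    Real.exp (-(n : ℝ) * t ^ 2 / 6) - (if t = 0 then 1 else Real.sin t / t) ^ n ≤
      Real.exp (-(n : ℝ) * t ^ 2 / 6) * ((n : ℝ) * t ^ 4 / 138) :=
  exp_sub_sinc_pow_bound_general n t h0 h1
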